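/- Fernández–Procacci bound on the one-polymer free energy difference at negative real activities: if μ, p : P → ℝ≥0 satisfy p_x · Z_{Γ*(x)}(μ) ≤ μ_x for all x ∈ P, then for every Λ ⊆ P and every x ∈ Λ, log Z_{Λ\{x}}(−p) − log Z_Λ(−p) ≤ log(1 + μ_x) (both partition functions being positive under these hypotheses). -/

import Mathlib

/-!
Write `Q(V) = Z_V(-p)` and `Zμ(D) = Z_D(μ)`. Deleting a polymer `z ∈ V` gives
`Q(V) = Q(V ∖ z) - p_z Q(V ∖ Γ*(z))`, and adding one to `D` gives
`Zμ(D ∪ z) = Zμ(D) + μ_z Zμ(D ∖ Γ*(z))`. The theorem is the case `D = ∅` of the stronger bound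
`Zμ(D) Q(V ∖ z) ≤ Zμ(D ∪ z) Q(V)` for all `D` disjoint from `V`, proved by induction on `V`.
By the two recursions it amounts to `p_z Q(V ∖ Γ*(z)) Zμ(D ∪ z) ≤ μ_z Zμ(D ∖ Γ*(z)) Q(V ∖ z)`.
Removing the polymers of `M = Γ*(z) ∩ (V ∖ z)` one at a time and applying the induction
hypothesis to each step, with the removed polymers moved into the context, bounds the left side
by `p_z Zμ(D ∪ z ∪ M) Q(V ∖ z) ≤ p_z Zμ(D ∖ Γ*(z)) Zμ(Γ*(z)) Q(V ∖ z)`, and the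
Fernández–Procacci condition `p_z Zμ(Γ*(z)) ≤ μ_z` finishes the step.
-/

open Finset

def indepSet {P : Type*} [DecidableEq P] (W : P → P → ℕ) (S : Finset P) : Prop :=
  ∀ x ∈ S, ∀ y ∈ S, x ≠ y → W x y = 1

instance {P : Type*} [DecidableEq P] (W : P → P → ℕ) : DecidablePred (indepSet W) :=
  fun _ => by unfold indepSet; infer_instance

/-- Polymer partition function `Z_Λ(a) = Σ_{S ⊆ Λ independent} Π_{y ∈ S} a y`. -/
def Zpart {P : Type*} [DecidableEq P] {R : Type*} [CommRing R] (W : P → P → ℕ)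
    (Λ : Finset P) (a : P → R) : R :=
  ∑ S ∈ Λ.powerset.filter (indepSet W), ∏ y ∈ S, a y

/-- `Γ*(x)`: the set of polymers incompatible with `x`. -/
def Γstar {P : Type*} [Fintype P] [DecidableEq P] (W : P → P → ℕ) (x : P) : Finset P :=
  Finset.univ.filter fun y => W x y = 0

section Independence

variable {P : Type*} [DecidableEq P] {W : P → P → ℕ}

theorem indepSet_empty : indepSet W ∅ := by
  simp [indepSet]

theorem indepSet.mono {S T : Finset P} (hT : indepSet W T) (hST : S ⊆ T) : indepSet W S :=
  fun x hx y hy hxy => hT x (hST hx) y (hST hy) hxy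

theorem indepSet_insert_iff (hsym : ∀ x y, W x y = W y x) {z : P} {T : Finset P} (hz : z ∉ T) :
    indepSet W (insert z T) ↔ indepSet W T ∧ ∀ t ∈ T, W z t = 1 := by
  constructor
  · intro h
    exact ⟨h.mono (subset_insert z T), fun t ht =>
      h z (mem_insert_self z T) t (mem_insert_of_mem ht) (ne_of_mem_of_not_mem ht hz).symm⟩
  · rintro ⟨hT, hzT⟩ u hu v hv huv
    rcases mem_insert.1 hu with rfl | huT <;> rcases mem_insert.1 hv with rfl | hvT
    · exact absurd rfl huv
    · exact hzT v hvT
    · rw [hsym]; exact hzT u huT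
    · exact hT u huT v hvT huv

theorem indepSet_insert_iff_disjoint_Γstar [Fintype P] (hsym : ∀ x y, W x y = W y x)
    (h01 : ∀ x y, W x y = 0 ∨ W x y = 1) {z : P} {T : Finset P} (hz : z ∉ T) :
    indepSet W (insert z T) ↔ indepSet W T ∧ Disjoint T (Γstar W z) := by
  rw [indepSet_insert_iff hsym hz, disjoint_left]
  refine and_congr_right fun _ => forall₂_congr fun t _ => ?_
  simp only [Γstar, mem_filter, mem_univ, true_and]
  rcases h01 z t with h | h <;> simp [h]

end Independence

section PartitionFunction

variable {P R : Type*} [DecidableEq P] [CommRing R] {W : P → P → ℕ}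

@[simp]
theorem Zpart_empty (a : P → R) : Zpart W ∅ a = 1 := by
  rw [Zpart, powerset_empty, filter_singleton, if_pos indepSet_empty, sum_singleton, prod_empty]

theorem Zpart_singleton (a : P → R) (z : P) : Zpart W {z} a = 1 + a z := by
  rw [Zpart, sum_filter, ← insert_empty, sum_powerset_insert (notMem_empty z)]
  simp [indepSet]

theorem Zpart_insert [Fintype P] (hsym : ∀ x y, W x y = W y x)
    (h01 : ∀ x y, W x y = 0 ∨ W x y = 1) (a : P → R) {D : Finset P} {z : P} (hz : z ∉ D) :
    Zpart W (insert z D) a = Zpart W D a + a z * Zpart W (D \ Γstar W z) a := by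
  simp only [Zpart, sum_filter]
  rw [sum_powerset_insert hz, mul_sum]
  congr 1
  have hzT : ∀ T ∈ D.powerset, z ∉ T := fun T hT h => hz (mem_powerset.1 hT h)
  calc ∑ T ∈ D.powerset, (if indepSet W (insert z T) then ∏ y ∈ insert z T, a y else 0)
      = ∑ T ∈ (D \ Γstar W z).powerset,
          (if indepSet W (insert z T) then ∏ y ∈ insert z T, a y else 0) := by
        refine (sum_subset (powerset_mono.2 sdiff_subset) fun T hTD hTG => if_neg ?_).symm
        rw [indepSet_insert_iff_disjoint_Γstar hsym h01 (hzT T hTD)]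
        rw [mem_powerset, subset_sdiff] at hTG
        exact fun h => hTG ⟨mem_powerset.1 hTD, h.2⟩
    _ = ∑ T ∈ (D \ Γstar W z).powerset, a z * (if indepSet W T then ∏ y ∈ T, a y else 0) := by
        refine sum_congr rfl fun T hT => ?_
        rw [mem_powerset, subset_sdiff] at hT
        have hzT' : z ∉ T := hzT T (mem_powerset.2 hT.1)
        simp only [indepSet_insert_iff_disjoint_Γstar hsym h01 hzT', hT.2, and_true,
          prod_insert hzT', mul_ite, mul_zero]

theorem Zpart_eq_Zpart_erase_add [Fintype P] (hsym : ∀ x y, W x y = W y x)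
    (hdiag : ∀ x, W x x = 0) (h01 : ∀ x y, W x y = 0 ∨ W x y = 1) (a : P → R)
    {V : Finset P} {z : P} (hz : z ∈ V) :
    Zpart W V a = Zpart W (V.erase z) a + a z * Zpart W (V \ Γstar W z) a := by
  have hzΓ : z ∈ Γstar W z := by simp [Γstar, hdiag]
  conv_lhs => rw [← insert_erase hz]
  rw [Zpart_insert hsym h01 a (notMem_erase z V), erase_sdiff_comm,
    erase_eq_of_notMem (fun h => (mem_sdiff.1 h).2 hzΓ)]

variable [PartialOrder R] [IsOrderedRing R] {μ : P → R}

variable (W) in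
theorem Zpart_nonneg (hμ : ∀ x, 0 ≤ μ x) (A : Finset P) : 0 ≤ Zpart W A μ :=
  sum_nonneg fun _ _ => prod_nonneg fun y _ => hμ y

variable (W) in
theorem one_le_Zpart (hμ : ∀ x, 0 ≤ μ x) (A : Finset P) : 1 ≤ Zpart W A μ := by
  have hempty : ∅ ∈ A.powerset.filter (indepSet W) :=
    mem_filter.2 ⟨empty_mem_powerset A, indepSet_empty⟩
  have h := single_le_sum (f := fun S => ∏ y ∈ S, μ y)
    (fun S _ => prod_nonneg fun y _ => hμ y) hempty
  rwa [prod_empty] at h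

theorem Zpart_mono (hμ : ∀ x, 0 ≤ μ x) {A B : Finset P} (h : A ⊆ B) :
    Zpart W A μ ≤ Zpart W B μ :=
  sum_le_sum_of_subset_of_nonneg (filter_subset_filter _ (powerset_mono.2 h))
    fun _ _ _ => prod_nonneg fun y _ => hμ y

/-- An independent subset of `A ∪ B` is determined by its traces on `A` and `B`, which are
independent. -/
theorem Zpart_union_le_mul (hμ : ∀ x, 0 ≤ μ x) {A B : Finset P} (hAB : Disjoint A B) :
    Zpart W (A ∪ B) μ ≤ Zpart W A μ * Zpart W B μ := by
  set split : Finset P → Finset P × Finset P := fun S => (S ∩ A, S ∩ B)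
  have hunion : ∀ S ∈ (A ∪ B).powerset, S ∩ A ∪ S ∩ B = S := fun S hS => by
    rw [← inter_union_distrib_left, inter_eq_left.2 (mem_powerset.1 hS)]
  have hinj : Set.InjOn split ((A ∪ B).powerset.filter (indepSet W)) := by
    intro S hS T hT hST
    rw [← hunion S (mem_filter.1 hS).1, ← hunion T (mem_filter.1 hT).1]
    simp only [split, Prod.mk.injEq] at hST
    rw [hST.1, hST.2]
  calc Zpart W (A ∪ B) μ
      = ∑ S ∈ (A ∪ B).powerset.filter (indepSet W), (∏ y ∈ S ∩ A, μ y) * ∏ y ∈ S ∩ B, μ y := by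
        refine sum_congr rfl fun S hS => ?_
        rw [← prod_union (hAB.mono inter_subset_right inter_subset_right),
          hunion S (mem_filter.1 hS).1]
    _ = ∑ pr ∈ ((A ∪ B).powerset.filter (indepSet W)).image split,
          (∏ y ∈ pr.1, μ y) * ∏ y ∈ pr.2, μ y :=
        (sum_image (g := split) (f := fun pr => (∏ y ∈ pr.1, μ y) * ∏ y ∈ pr.2, μ y) hinj).symm
    _ ≤ ∑ pr ∈ A.powerset.filter (indepSet W) ×ˢ B.powerset.filter (indepSet W),
          (∏ y ∈ pr.1, μ y) * ∏ y ∈ pr.2, μ y := by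
        refine sum_le_sum_of_subset_of_nonneg ?_ fun _ _ _ =>
          mul_nonneg (prod_nonneg fun y _ => hμ y) (prod_nonneg fun y _ => hμ y)
        simp only [subset_iff, mem_image, mem_product, mem_filter, mem_powerset]
        rintro _ ⟨S, ⟨-, hS⟩, rfl⟩
        exact ⟨⟨inter_subset_right, hS.mono inter_subset_left⟩,
          ⟨inter_subset_right, hS.mono inter_subset_left⟩⟩
    _ = Zpart W A μ * Zpart W B μ := by
        rw [Zpart, Zpart, sum_mul_sum, sum_product]

end PartitionFunction

section Telescoping

variable {P : Type*} [DecidableEq P] {W : P → P → ℕ} {μ p : P → ℝ}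

/-- `Q(V ∖ z) / Q(V) ≤ Zμ(D ∪ z) / Zμ(D)` for every context `D` outside `V`, cross-multiplied;
for `D = ∅` it is the bound of the theorem. -/
def ErasureBound (W : P → P → ℕ) (μ p : P → ℝ) (V : Finset P) : Prop :=
  ∀ z ∈ V, ∀ D : Finset P, Disjoint D V →
    Zpart W D μ * Zpart W (V.erase z) (fun y => -p y) ≤
      Zpart W (insert z D) μ * Zpart W V (fun y => -p y)

theorem Zpart_neg_pos_of_erasureBound (hμ : ∀ x, 0 ≤ μ x) {V : Finset P}
    (hV : ∀ U ⊆ V, ErasureBound W μ p U) : 0 < Zpart W V (fun y => -p y) := by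
  induction V using Finset.induction_on with
  | empty => simp
  | insert z V hz ih =>
    have h := hV _ Subset.rfl z (mem_insert_self z V) ∅ (disjoint_empty_left _)
    rw [erase_insert hz, Zpart_empty, one_mul] at h
    have hQ := ih fun U hU => hV U (hU.trans (subset_insert z V))
    exact pos_of_mul_pos_right (hQ.trans_le h) (Zpart_nonneg W hμ _)

theorem Zpart_mul_Zpart_sdiff_le (hμ : ∀ x, 0 ≤ μ x) {V : Finset P}
    (hV : ∀ U ⊆ V, ErasureBound W μ p U) {M D : Finset P} (hMV : M ⊆ V) (hDV : Disjoint D V) :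
    Zpart W D μ * Zpart W (V \ M) (fun y => -p y) ≤
      Zpart W (D ∪ M) μ * Zpart W V (fun y => -p y) := by
  induction M using Finset.induction_on generalizing V D with
  | empty => simp
  | insert z M hz ih =>
    obtain ⟨hzV, hMV⟩ := insert_subset_iff.1 hMV
    have hstep := hV V Subset.rfl z hzV D hDV
    have hrest := ih (V := V.erase z) (D := insert z D)
      (fun U hU => hV U (hU.trans (erase_subset z V)))
      (fun y hy => mem_erase.2 ⟨ne_of_mem_of_not_mem hy hz, hMV hy⟩)
      (disjoint_insert_left.2 ⟨notMem_erase z V, hDV.mono_right (erase_subset z V)⟩)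
    rw [erase_sdiff_comm, ← sdiff_insert, insert_union, ← union_insert] at hrest
    refine le_of_mul_le_mul_left ?_ (zero_lt_one.trans_le (one_le_Zpart W hμ (insert z D)))
    linarith [mul_le_mul_of_nonneg_left hrest (Zpart_nonneg W hμ D),
      mul_le_mul_of_nonneg_left hstep (Zpart_nonneg W hμ (D ∪ insert z M))]

end Telescoping

section FernandezProcacci

variable {P : Type*} [Fintype P] [DecidableEq P] {W : P → P → ℕ} {μ p : P → ℝ}

theorem p_mul_Zpart_sdiff_Γstar_le (hdiag : ∀ x, W x x = 0) (hμ : ∀ x, 0 ≤ μ x)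
    (hp : ∀ x, 0 ≤ p x) (hFP : ∀ x, p x * Zpart W (Γstar W x) μ ≤ μ x)
    {V : Finset P} {z : P} (hV : ∀ U ⊆ V.erase z, ErasureBound W μ p U)
    {D : Finset P} (hD : Disjoint D V) :
    p z * Zpart W (V \ Γstar W z) (fun y => -p y) * Zpart W (insert z D) μ ≤
      μ z * Zpart W (D \ Γstar W z) μ * Zpart W (V.erase z) (fun y => -p y) := by
  have hzΓ : z ∈ Γstar W z := by simp [Γstar, hdiag]
  set M := V.erase z ∩ Γstar W z
  have hVM : V.erase z \ M = V \ Γstar W z := by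
    rw [sdiff_inter_self_left, erase_sdiff_comm,
      erase_eq_of_notMem fun h => (mem_sdiff.1 h).2 hzΓ]
  have htele := Zpart_mul_Zpart_sdiff_le hμ hV (M := M) inter_subset_left
    (disjoint_insert_left.2 ⟨notMem_erase z V, hD.mono_right (erase_subset z V)⟩)
  rw [hVM] at htele
  have hsplit : Zpart W (insert z D ∪ M) μ ≤
      Zpart W (D \ Γstar W z) μ * Zpart W (Γstar W z) μ := by
    refine (Zpart_mono hμ ?_).trans (Zpart_union_le_mul hμ sdiff_disjoint)
    rw [sdiff_union_self_eq_union]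
    exact union_subset (insert_subset (mem_union_right D hzΓ) subset_union_left)
      (inter_subset_right.trans subset_union_right)
  have hQ := (Zpart_neg_pos_of_erasureBound hμ hV).le
  linarith [mul_le_mul_of_nonneg_left htele (hp z),
    mul_le_mul_of_nonneg_right hsplit (mul_nonneg (hp z) hQ),
    mul_le_mul_of_nonneg_right (hFP z) (mul_nonneg (Zpart_nonneg W hμ (D \ Γstar W z)) hQ)]

theorem erasureBound_of_fp_condition (hsym : ∀ x y, W x y = W y x) (hdiag : ∀ x, W x x = 0)
    (h01 : ∀ x y, W x y = 0 ∨ W x y = 1) (hμ : ∀ x, 0 ≤ μ x) (hp : ∀ x, 0 ≤ p x)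
    (hFP : ∀ x, p x * Zpart W (Γstar W x) μ ≤ μ x) (V : Finset P) : ErasureBound W μ p V := by
  induction V using Finset.strongInduction with
  | H V ih =>
    intro z hz D hD
    have hkey := p_mul_Zpart_sdiff_Γstar_le hdiag hμ hp hFP
      (fun U hU => ih U (hU.trans_ssubset (erase_ssubset hz))) hD
    rw [Zpart_insert hsym h01 μ (disjoint_right.1 hD hz)] at hkey ⊢
    rw [Zpart_eq_Zpart_erase_add hsym hdiag h01 (fun y => -p y) hz]
    linarith

end FernandezProcacci

theorem fp_free_energy_difference_bound {P : Type*} [Fintype P] [DecidableEq P] (W : P → P → ℕ)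
    (hsym : ∀ x y, W x y = W y x) (hdiag : ∀ x, W x x = 0)
    (h01 : ∀ x y, W x y = 0 ∨ W x y = 1)
    (μ p : P → ℝ) (hμ : ∀ x, 0 ≤ μ x) (hp : ∀ x, 0 ≤ p x)
    (hFP : ∀ x, p x * Zpart W (Γstar W x) μ ≤ μ x)
    (Λ : Finset P) (x : P) (hx : x ∈ Λ) :
    Real.log (Zpart W (Λ.erase x) (fun y => -p y)) - Real.log (Zpart W Λ (fun y => -p y)) ≤
      Real.log (1 + μ x) := by
  have hbound : ∀ V, ErasureBound W μ p V := erasureBound_of_fp_condition hsym hdiag h01 hμ hp hFP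
  have hpos : ∀ V, 0 < Zpart W V (fun y => -p y) :=
    fun V => Zpart_neg_pos_of_erasureBound hμ fun U _ => hbound U
  have hratio := hbound Λ x hx ∅ (disjoint_empty_left Λ)
  rw [Zpart_empty, one_mul, insert_empty, Zpart_singleton] at hratio
  rw [sub_le_iff_le_add, ← Real.log_mul (by linarith [hμ x]) (hpos Λ).ne']
  exact Real.log_le_log (hpos _) hratio
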